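/- For a uniformly random subset S of {0,1}^n with n ≥ 1, the third central moment of the number X_1 of edges contained in S equals 3 n³ 2^n / 64, i.e., E[(X_1 − μ)³] = 3 n³ 2^n / 64 where μ = E[X_1] = n·2^{n-1}/4. -/

import Mathlib

open Finset

def cube {n : ℕ} (w : Fin n → Option Bool) : Finset (Fin n → Bool) :=
  Finset.univ.filter fun x => ∀ i, ∀ b, w i = some b → x i = b

def Word (n r : ℕ) : Finset (Fin n → Option Bool) :=
  Finset.univ.filter fun w => (Finset.univ.filter fun i => w i = none).card = r

/-- Expectation with respect to a uniformly random subset `S ⊆ {0,1}^n`. -/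
noncomputable def Ex (n : ℕ) (f : Finset (Fin n → Bool) → ℝ) : ℝ :=
  (∑ S : Finset (Fin n → Bool), f S) / (Fintype.card (Finset (Fin n → Bool)))

/-- The number of `r`-dimensional subcubes contained in `S`. -/
def Xr (n r : ℕ) (S : Finset (Fin n → Bool)) : ℕ :=
  ((Word n r).filter fun w => cube w ⊆ S).card

/-! Write `s_x = ±1` according as `x ∈ S`. The indicator of an edge `{a, b}` is
`(1 + s_a)(1 + s_b)/4`, and every vertex lies on `n` edges, so `X₁ - μ = (Q + n L)/4` with
`L = ∑ₓ s_x` and `Q = ∑_{ab} s_a s_b`. The expectation of a product of spins is `1` if every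
vertex occurs an even number of times and `0` otherwise. Hence `E[L³]` and `E[Q² L]` vanish
(an odd number of factors), `E[Q³]` vanishes because every edge has exactly one end of odd
Hamming weight, and `E[Q L²] = 2 · #edges`, the surviving terms being those where `(x, y)` is
an ordering of the ends of the edge. -/

section Spin

variable {α : Type*} [DecidableEq α]

def spin (S : Finset α) (x : α) : ℝ := if x ∈ S then 1 else -1

def spinProd (S : Finset α) (m : Multiset α) : ℝ := (m.map (spin S)).prod

@[simp] lemma spinProd_singleton (S : Finset α) (x : α) : spinProd S {x} = spin S x := by
  simp [spinProd]

lemma spinProd_add (S : Finset α) (m m' : Multiset α) :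
    spinProd S (m + m') = spinProd S m * spinProd S m' := by
  simp [spinProd, Multiset.prod_add]

lemma spinProd_eq_prod_pow_count [Fintype α] (S : Finset α) (m : Multiset α) :
    spinProd S m = ∏ x, spin S x ^ m.count x := by
  rw [spinProd, Finset.prod_multiset_map_count]
  refine Finset.prod_subset (Finset.subset_univ _) fun x _ hx => ?_
  rw [Multiset.count_eq_zero_of_notMem (by simpa using hx), pow_zero]

/-- Summing over all `S` factorises coordinatewise into `∏ x, (1 + (-1) ^ m.count x)`. -/
lemma sum_spinProd [Fintype α] (m : Multiset α) :
    ∑ S : Finset α, spinProd S m =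
      if ∀ x, Even (m.count x) then 2 ^ Fintype.card α else 0 := by
  have hsplit : ∀ S : Finset α, spinProd S m =
      (∏ x ∈ S, (1 : ℝ) ^ m.count x) * ∏ x ∈ Finset.univ \ S, (-1 : ℝ) ^ m.count x := by
    intro S
    rw [spinProd_eq_prod_pow_count, ← Finset.prod_sdiff (Finset.subset_univ S), mul_comm]
    congr 1
    · exact Finset.prod_congr rfl fun x hx => by simp [spin, hx]
    · exact Finset.prod_congr rfl fun x hx => by simp [spin, (Finset.mem_sdiff.1 hx).2]
  simp_rw [hsplit, ← Finset.powerset_univ, ← Finset.prod_add]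
  split_ifs with h
  · norm_num [(h _).neg_one_pow, Finset.card_univ]
  · push Not at h
    obtain ⟨x, hx⟩ := h
    exact Finset.prod_eq_zero (Finset.mem_univ x) (by simp [Nat.not_even_iff_odd.1 hx])

lemma ite_subset_eq_prod (C S : Finset α) :
    (if C ⊆ S then 1 else 0 : ℝ) = ∏ x ∈ C, (1 + spin S x) / 2 := by
  have h : ∀ x, (1 + spin S x) / 2 = if x ∈ S then 1 else 0 := by
    intro x
    unfold spin
    split_ifs <;> norm_num
  simp_rw [h, Finset.prod_boole]
  rfl

end Spin

section Expectation

variable {n : ℕ}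

lemma Ex_add (f g : Finset (Fin n → Bool) → ℝ) :
    Ex n (fun S => f S + g S) = Ex n f + Ex n g := by
  rw [Ex, Ex, Ex, Finset.sum_add_distrib, add_div]

lemma Ex_const_mul (c : ℝ) (f : Finset (Fin n → Bool) → ℝ) :
    Ex n (fun S => c * f S) = c * Ex n f := by
  rw [Ex, Ex, ← Finset.mul_sum, mul_div_assoc]

lemma Ex_const (c : ℝ) : Ex n (fun _ => c) = c := by
  rw [Ex, Finset.sum_const, Finset.card_univ, nsmul_eq_mul, mul_div_cancel_left₀]
  positivity

lemma Ex_sum {ι : Type*} (s : Finset ι) (f : ι → Finset (Fin n → Bool) → ℝ) :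
    Ex n (fun S => ∑ i ∈ s, f i S) = ∑ i ∈ s, Ex n (f i) := by
  rw [Ex, Finset.sum_comm, Finset.sum_div]
  rfl

lemma Ex_spinProd (m : Multiset (Fin n → Bool)) :
    Ex n (fun S => spinProd S m) = if ∀ x, Even (m.count x) then 1 else 0 := by
  rw [Ex, sum_spinProd, Fintype.card_finset]
  split_ifs <;> simp

lemma Ex_sum_spinProd_mul_sum_mul_sum {ι κ ο : Type*} (s : Finset ι) (t : Finset κ)
    (u : Finset ο) (f : ι → Multiset (Fin n → Bool)) (g : κ → Multiset (Fin n → Bool))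
    (h : ο → Multiset (Fin n → Bool)) :
    Ex n (fun S => (∑ i ∈ s, spinProd S (f i)) * (∑ j ∈ t, spinProd S (g j)) *
        ∑ k ∈ u, spinProd S (h k)) =
      ∑ i ∈ s, ∑ j ∈ t, ∑ k ∈ u,
        if ∀ x, Even ((f i + g j + h k).count x) then 1 else 0 := by
  simp_rw [Finset.sum_mul_sum, Finset.sum_mul]
  simp_rw [← spinProd_add, Ex_sum, Ex_spinProd]
  exact Finset.sum_congr rfl fun i _ => Finset.sum_comm

end Expectation

section Parity

variable {α : Type*} [DecidableEq α]

lemma Multiset.even_card_of_forall_even_count {m : Multiset α} (h : ∀ x, Even (m.count x)) :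
    Even (Multiset.card m) := by
  rw [← Multiset.toFinset_sum_count_eq]
  exact Finset.even_sum _ fun x _ => h x

lemma Multiset.even_countP_of_forall_even_count (p : α → Prop) [DecidablePred p]
    {m : Multiset α} (h : ∀ x, Even (m.count x)) : Even (m.countP p) := by
  rw [Multiset.countP_eq_card_filter]
  refine Multiset.even_card_of_forall_even_count fun x => ?_
  rw [Multiset.count_filter]
  split_ifs
  exacts [h x, .zero]

lemma forall_even_count_pair_add_iff {a b x y : α} (hab : a ≠ b) :
    (∀ z, Even (({a, b} + {x} + {y} : Multiset α).count z)) ↔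
      x = a ∧ y = b ∨ x = b ∧ y = a := by
  simp only [Multiset.insert_eq_cons, Multiset.count_add, Multiset.count_cons,
    Multiset.count_singleton]
  constructor
  · intro h
    have ha := h a
    have hb := h b
    split_ifs at ha hb <;> grind
  · rintro (⟨rfl, rfl⟩ | ⟨rfl, rfl⟩) z <;> split_ifs <;> grind

lemma sum_sum_ite_forall_even_count_pair_add [Fintype α] {a b : α} (hab : a ≠ b) :
    ∑ x, ∑ y, (if ∀ z, Even (({a, b} + {x} + {y} : Multiset α).count z) then 1 else 0 : ℝ) =
      2 := by
  simp_rw [forall_even_count_pair_add_iff hab]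
  rw [← Finset.sum_product', Finset.sum_boole]
  have : ({p ∈ Finset.univ ×ˢ Finset.univ | p.1 = a ∧ p.2 = b ∨ p.1 = b ∧ p.2 = a} :
      Finset (α × α)) = {(a, b), (b, a)} := by
    ext ⟨x, y⟩
    simp
  rw [this, Finset.card_pair (by simp [hab])]
  norm_num

end Parity

section Edges

variable {n : ℕ}

def lowEnd (w : Fin n → Option Bool) : Fin n → Bool := fun j => (w j).getD false

def highEnd (w : Fin n → Option Bool) : Fin n → Bool := fun j => (w j).getD true

def ends (w : Fin n → Option Bool) : Multiset (Fin n → Bool) := {lowEnd w, highEnd w}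

def edgeAt (x : Fin n → Bool) (i : Fin n) : Fin n → Option Bool :=
  fun j => if j = i then none else some (x j)

lemma mem_Word_one_iff {w : Fin n → Option Bool} :
    w ∈ Word n 1 ↔ ∃ i, ∀ j, w j = none ↔ j = i := by
  simp [Word, Finset.card_eq_one, Finset.ext_iff]

lemma lowEnd_ne_highEnd {w : Fin n → Option Bool} {i : Fin n} (hi : w i = none) :
    lowEnd w ≠ highEnd w :=
  fun h => by simpa [lowEnd, highEnd, hi] using congrFun h i

lemma cube_eq_pair {w : Fin n → Option Bool} {i : Fin n} (hw : ∀ j, w j = none ↔ j = i) :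
    cube w = {lowEnd w, highEnd w} := by
  ext x
  simp only [cube, Finset.mem_filter, Finset.mem_univ, true_and, Finset.mem_insert,
    Finset.mem_singleton]
  constructor
  · intro hx
    have hagree : ∀ j, w j ≠ none → lowEnd w j = x j ∧ highEnd w j = x j := by
      intro j hj
      obtain ⟨c, hc⟩ := Option.ne_none_iff_exists'.1 hj
      simp [lowEnd, highEnd, hc, hx j c hc]
    cases hxi : x i
    · left
      funext j
      by_cases hj : j = i
      · subst hj; simp [lowEnd, (hw j).2 rfl, hxi]
      · exact (hagree j ((hw j).not.2 hj)).1.symm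
    · right
      funext j
      by_cases hj : j = i
      · subst hj; simp [highEnd, (hw j).2 rfl, hxi]
      · exact (hagree j ((hw j).not.2 hj)).2.symm
  · rintro (rfl | rfl) j c hc <;> simp [lowEnd, highEnd, hc]

lemma card_filter_highEnd {w : Fin n → Option Bool} {i : Fin n}
    (hw : ∀ j, w j = none ↔ j = i) :
    #{j | highEnd w j = true} = #{j | lowEnd w j = true} + 1 := by
  have hlow : i ∉ ({j | lowEnd w j = true} : Finset (Fin n)) := by
    simp only [Finset.mem_filter]
    simp [lowEnd, (hw i).2 rfl]
  rw [← Finset.card_insert_of_notMem hlow]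
  congr 1
  ext j
  simp only [Finset.mem_filter, Finset.mem_insert]
  by_cases hj : j = i
  · subst hj; simp [lowEnd, highEnd, (hw j).2 rfl]
  · obtain ⟨c, hc⟩ := Option.ne_none_iff_exists'.1 ((hw j).not.2 hj)
    simp [lowEnd, highEnd, hc, hj]

lemma countP_ends_odd_weight {w : Fin n → Option Bool} (hw : w ∈ Word n 1) :
    (ends w).countP (fun x => Odd #{j | x j = true}) = 1 := by
  obtain ⟨i, hi⟩ := mem_Word_one_iff.1 hw
  rw [ends, Multiset.insert_eq_cons, ← Multiset.cons_zero, Multiset.countP_cons,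
    Multiset.countP_cons, Multiset.countP_zero, card_filter_highEnd hi]
  by_cases h : Odd #{j | lowEnd w j = true} <;> simp [h, Nat.odd_add_one]

lemma not_forall_even_count_ends_add {w₁ w₂ w₃ : Fin n → Option Bool} (h₁ : w₁ ∈ Word n 1)
    (h₂ : w₂ ∈ Word n 1) (h₃ : w₃ ∈ Word n 1) :
    ¬ ∀ x, Even ((ends w₁ + ends w₂ + ends w₃).count x) := by
  intro h
  have := Multiset.even_countP_of_forall_even_count (fun x => Odd #{j | x j = true}) h
  rw [Multiset.countP_add, Multiset.countP_add, countP_ends_odd_weight h₁,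
    countP_ends_odd_weight h₂, countP_ends_odd_weight h₃] at this
  exact absurd this (by decide)

lemma edgeAt_injective (x : Fin n → Bool) : Function.Injective (edgeAt x) := by
  intro i i' h
  by_contra hne
  simpa [edgeAt, hne] using congrFun h i

lemma mem_Word_one_and_mem_cube_iff {w : Fin n → Option Bool} {x : Fin n → Bool} :
    w ∈ Word n 1 ∧ x ∈ cube w ↔ ∃ i, edgeAt x i = w := by
  simp only [mem_Word_one_iff, cube, Finset.mem_filter, Finset.mem_univ, true_and]
  constructor
  · rintro ⟨⟨i, hi⟩, hx⟩
    refine ⟨i, funext fun j => ?_⟩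
    by_cases hj : j = i
    · simp [edgeAt, hj, (hi i).2 rfl]
    · obtain ⟨c, hc⟩ := Option.ne_none_iff_exists'.1 ((hi j).not.2 hj)
      simp [edgeAt, hj, hc, hx j c hc]
  · rintro ⟨i, rfl⟩
    exact ⟨⟨i, fun j => by simp [edgeAt]⟩, fun j b => by simp [edgeAt]⟩

lemma card_filter_mem_cube (x : Fin n → Bool) : #{w ∈ Word n 1 | x ∈ cube w} = n := by
  have : {w ∈ Word n 1 | x ∈ cube w} = Finset.univ.image (edgeAt x) := by
    ext w
    simp [mem_Word_one_and_mem_cube_iff]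
  rw [this, Finset.card_image_of_injective _ (edgeAt_injective x), Finset.card_univ,
    Fintype.card_fin]

lemma sum_Word_one_sum_cube {M : Type*} [AddCommMonoid M] (f : (Fin n → Bool) → M) :
    ∑ w ∈ Word n 1, ∑ x ∈ cube w, f x = n • ∑ x, f x := by
  rw [Finset.sum_comm' (t' := Finset.univ) (s' := fun x => {w ∈ Word n 1 | x ∈ cube w})
    (by simp [cube]), Finset.smul_sum]
  simp [card_filter_mem_cube]

end Edges

section Decomposition

variable {n : ℕ}

lemma card_cube_of_mem_Word_one {w : Fin n → Option Bool} (hw : w ∈ Word n 1) :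
    #(cube w) = 2 := by
  obtain ⟨i, hi⟩ := mem_Word_one_iff.1 hw
  rw [cube_eq_pair hi, Finset.card_pair (lowEnd_ne_highEnd ((hi i).2 rfl))]

lemma two_mul_card_Word_one : 2 * #(Word n 1) = n * 2 ^ n := by
  have h := sum_Word_one_sum_cube (n := n) (fun _ => 1)
  simp only [Finset.sum_const, smul_eq_mul, mul_one, Finset.card_univ, Fintype.card_pi,
    Fintype.card_bool, Finset.prod_const, Fintype.card_fin] at h
  rwa [Finset.sum_congr rfl fun w hw => card_cube_of_mem_Word_one hw, Finset.sum_const,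
    smul_eq_mul, mul_comm] at h

lemma card_Word_one : #(Word n 1) = n * 2 ^ (n - 1) := by
  have h := two_mul_card_Word_one (n := n)
  cases n with
  | zero => simpa using h
  | succ k => rw [pow_succ] at h; rw [Nat.add_sub_cancel]; linarith

def spinSum (S : Finset (Fin n → Bool)) : ℝ := ∑ x, spinProd S {x}

def edgeSpinSum (S : Finset (Fin n → Bool)) : ℝ := ∑ w ∈ Word n 1, spinProd S (ends w)

lemma ite_cube_subset_eq {w : Fin n → Option Bool} (hw : w ∈ Word n 1)
    (S : Finset (Fin n → Bool)) :
    (if cube w ⊆ S then 1 else 0 : ℝ) =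
      (1 + ∑ x ∈ cube w, spin S x + spinProd S (ends w)) / 4 := by
  obtain ⟨i, hi⟩ := mem_Word_one_iff.1 hw
  have hne := lowEnd_ne_highEnd ((hi i).2 rfl)
  rw [ite_subset_eq_prod, cube_eq_pair hi, Finset.prod_pair hne, Finset.sum_pair hne]
  simp [ends, spinProd]
  ring

lemma Xr_one_eq (S : Finset (Fin n → Bool)) :
    (Xr n 1 S : ℝ) = (#(Word n 1) + n * spinSum S + edgeSpinSum S) / 4 := by
  rw [Xr, Finset.card_filter]
  push_cast
  rw [Finset.sum_congr rfl fun w hw => ite_cube_subset_eq hw S, ← Finset.sum_div,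
    Finset.sum_add_distrib, Finset.sum_add_distrib, Finset.sum_const, nsmul_one,
    sum_Word_one_sum_cube, nsmul_eq_mul]
  simp [spinSum, edgeSpinSum]

end Decomposition

section Moments

variable {n : ℕ}

lemma Ex_spinSum : Ex n spinSum = 0 := by
  unfold spinSum
  simp only [Ex_sum, Ex_spinProd]
  refine Finset.sum_eq_zero fun x _ => if_neg fun h => ?_
  simpa using h x

lemma Ex_edgeSpinSum : Ex n edgeSpinSum = 0 := by
  unfold edgeSpinSum
  simp only [Ex_sum, Ex_spinProd]
  refine Finset.sum_eq_zero fun w hw => if_neg fun h => ?_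
  obtain ⟨i, hi⟩ := mem_Word_one_iff.1 hw
  simpa [ends, lowEnd_ne_highEnd ((hi i).2 rfl)] using h (lowEnd w)

lemma Ex_spinSum_pow_three : Ex n (fun S => spinSum S ^ 3) = 0 := by
  simp_rw [pow_three', spinSum]
  rw [Ex_sum_spinProd_mul_sum_mul_sum]
  refine Finset.sum_eq_zero fun x _ => Finset.sum_eq_zero fun y _ =>
    Finset.sum_eq_zero fun z _ => if_neg fun h => ?_
  have := Multiset.even_card_of_forall_even_count h
  simp_all [Nat.even_add_one]

lemma Ex_edgeSpinSum_sq_mul_spinSum : Ex n (fun S => edgeSpinSum S ^ 2 * spinSum S) = 0 := by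
  simp_rw [sq, edgeSpinSum, spinSum]
  rw [Ex_sum_spinProd_mul_sum_mul_sum]
  refine Finset.sum_eq_zero fun w _ => Finset.sum_eq_zero fun w' _ =>
    Finset.sum_eq_zero fun x _ => if_neg fun h => ?_
  have := Multiset.even_card_of_forall_even_count h
  simp_all [ends, Nat.even_add_one]

lemma Ex_edgeSpinSum_pow_three : Ex n (fun S => edgeSpinSum S ^ 3) = 0 := by
  simp_rw [pow_three', edgeSpinSum]
  rw [Ex_sum_spinProd_mul_sum_mul_sum]
  exact Finset.sum_eq_zero fun w₁ h₁ => Finset.sum_eq_zero fun w₂ h₂ =>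
    Finset.sum_eq_zero fun w₃ h₃ => if_neg (not_forall_even_count_ends_add h₁ h₂ h₃)

lemma Ex_edgeSpinSum_mul_spinSum_sq :
    Ex n (fun S => edgeSpinSum S * spinSum S ^ 2) = 2 * #(Word n 1) := by
  simp_rw [sq, ← mul_assoc, edgeSpinSum, spinSum]
  rw [Ex_sum_spinProd_mul_sum_mul_sum]
  calc _ = ∑ w ∈ Word n 1, (2 : ℝ) := Finset.sum_congr rfl fun w hw => by
        obtain ⟨i, hi⟩ := mem_Word_one_iff.1 hw
        exact sum_sum_ite_forall_even_count_pair_add (lowEnd_ne_highEnd ((hi i).2 rfl))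
    _ = 2 * #(Word n 1) := by rw [Finset.sum_const, nsmul_eq_mul, mul_comm]

end Moments

theorem third_central_moment_X1_general (n : ℕ) :
    Ex n (fun S => (Xr n 1 S : ℝ)) = (n : ℝ) * 2 ^ (n - 1) / 4 ∧
    Ex n (fun S => ((Xr n 1 S : ℝ) - (n : ℝ) * 2 ^ (n - 1) / 4) ^ 3)
      = 3 * (n : ℝ) ^ 3 * 2 ^ n / 64 := by
  have hN : (#(Word n 1) : ℝ) = n * 2 ^ (n - 1) := mod_cast card_Word_one
  have hXr : ∀ S, (Xr n 1 S : ℝ) =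
      n * 2 ^ (n - 1) / 4 + 1 / 4 * (n * spinSum S + edgeSpinSum S) :=
    fun S => by rw [Xr_one_eq, hN]; ring
  constructor
  · simp_rw [hXr, Ex_add, Ex_const, Ex_const_mul, Ex_add, Ex_const_mul, Ex_spinSum,
      Ex_edgeSpinSum]
    ring
  · have hcube : ∀ S, ((Xr n 1 S : ℝ) - n * 2 ^ (n - 1) / 4) ^ 3 =
        (1 / 64) * (edgeSpinSum S ^ 3 + 3 * n * (edgeSpinSum S ^ 2 * spinSum S) +
          3 * n ^ 2 * (edgeSpinSum S * spinSum S ^ 2) + n ^ 3 * spinSum S ^ 3) :=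
      fun S => by rw [hXr]; ring
    simp_rw [hcube, Ex_const_mul, Ex_add, Ex_const_mul, Ex_edgeSpinSum_pow_three,
      Ex_edgeSpinSum_sq_mul_spinSum, Ex_edgeSpinSum_mul_spinSum_sq, Ex_spinSum_pow_three]
    rw [show 2 * (#(Word n 1) : ℝ) = n * 2 ^ n from mod_cast two_mul_card_Word_one]
    ring

/-- The third central moment of the number of edges contained in a uniformly
random subset of `{0,1}^n` equals `3 n³ 2^n / 64`, where the mean is
`μ = E[X₁] = n·2^{n-1}/4`. -/
theorem third_central_moment_X1 (n : ℕ) (hn : 1 ≤ n) :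
    Ex n (fun S => (Xr n 1 S : ℝ)) = (n : ℝ) * 2 ^ (n - 1) / 4 ∧
    Ex n (fun S => ((Xr n 1 S : ℝ) - (n : ℝ) * 2 ^ (n - 1) / 4) ^ 3)
      = 3 * (n : ℝ) ^ 3 * 2 ^ n / 64 :=
  third_central_moment_X1_general n
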